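/- (Elliptical potential lemma.) Let λ > 0 and φ_1, …, φ_k ∈ ℝ^d with ‖φ_i‖ ≤ L_φ for all i, and for each i set Σ_i := λ·I + Σ_{j=1}^{i−1} φ_j φ_jᵀ. Then Σ_{i=1}^{k} min{1, ‖φ_i‖²_{Σ_i⁻¹}} ≤ 2·d·log((λ + k·L_φ²)/λ). -/

import Mathlib

/-!
The matrix determinant lemma turns each rank-one update `Σ_{i+1} = Σ_i + φ_i φ_iᵀ` into
`det Σ_{i+1} = det Σ_i · (1 + ‖φ_i‖²_{Σ_i⁻¹})`, so the product of these factors over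
`i ≤ k` is `det Σ_{k+1} / λ^d`. Every eigenvalue of `Σ_{k+1}` is at most `λ + k L_φ²`,
which bounds the product by `((λ + k L_φ²) / λ)^d`. Taking logarithms and using
`min 1 x ≤ 2 log (1 + x)` for `x ≥ 0` gives the claim.
-/

open Matrix Finset

theorem min_one_le_two_mul_log_one_add {x : ℝ} (hx : 0 ≤ x) :
    min 1 x ≤ 2 * Real.log (1 + x) := by
  have hlog := Real.le_log_one_add_of_nonneg hx
  have hrat : min 1 x ≤ 2 * (2 * x / (x + 2)) := by
    rw [mul_div_assoc', le_div_iff₀ (by linarith)]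
    rcases le_total x 1 with h | h
    · rw [min_eq_right h]; nlinarith
    · rw [min_eq_left h]; linarith
  linarith

namespace Matrix

variable {n : Type*} [Fintype n]

theorem sq_dotProduct_le_dotProduct_self_mul (u v : n → ℝ) :
    (u ⬝ᵥ v) ^ 2 ≤ (u ⬝ᵥ u) * (v ⬝ᵥ v) := by
  simpa only [dotProduct, sq] using sum_mul_sq_le_sq_mul_sq univ u v

variable [DecidableEq n]

theorem det_add_vecMulVec {R : Type*} [CommRing R] {A : Matrix n n R} (hA : IsUnit A.det)
    (u v : n → R) : (A + vecMulVec u v).det = A.det * (1 + v ⬝ᵥ (A⁻¹ *ᵥ u)) := by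
  have hfactor : A + vecMulVec u v = A * (1 + vecMulVec (A⁻¹ *ᵥ u) v) := by
    rw [mul_add, mul_one, mul_vecMulVec, mulVec_mulVec, mul_nonsing_inv A hA, one_mulVec]
  rw [hfactor, det_mul, vecMulVec_eq Unit, det_one_add_replicateCol_mul_replicateRow]

theorem IsHermitian.eigenvalues_le {A : Matrix n n ℝ} (hA : A.IsHermitian) {c : ℝ}
    (h : ∀ x, x ⬝ᵥ (A *ᵥ x) ≤ c * (x ⬝ᵥ x)) (i : n) : hA.eigenvalues i ≤ c := by
  set v : n → ℝ := ⇑(hA.eigenvectorBasis i)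
  have hv0 : v ≠ 0 := by simpa [v] using hA.eigenvectorBasis.orthonormal.ne_zero i
  have hv : 0 < v ⬝ᵥ v :=
    (Fintype.sum_nonneg fun j => mul_self_nonneg (v j)).lt_of_ne'
      (dotProduct_self_eq_zero.not.mpr hv0)
  have hquad := h v
  rw [mulVec_eigenvectorBasis, dotProduct_smul, smul_eq_mul] at hquad
  exact le_of_mul_le_mul_right hquad hv

theorem PosSemidef.det_le_pow {A : Matrix n n ℝ} (hA : A.PosSemidef) {c : ℝ}
    (h : ∀ x, x ⬝ᵥ (A *ᵥ x) ≤ c * (x ⬝ᵥ x)) : A.det ≤ c ^ Fintype.card n := by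
  rw [hA.isHermitian.det_eq_prod_eigenvalues, ← card_univ, ← prod_const]
  exact prod_le_prod (fun i _ => by simpa using hA.eigenvalues_nonneg i)
    (fun i _ => by simpa using hA.isHermitian.eigenvalues_le h i)

end Matrix

section RegularizedGram

variable {n : Type*} [DecidableEq n]

/-- The paper's `Σ_i`; truncated subtraction makes `Σ_0 = Σ_1 = λ I`. -/
noncomputable def regularizedGram (lam : ℝ) (φ : ℕ → n → ℝ) (i : ℕ) : Matrix n n ℝ :=
  lam • 1 + ∑ j ∈ Icc 1 (i - 1), vecMulVec (φ j) (φ j)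

variable {lam : ℝ} {φ : ℕ → n → ℝ}

theorem regularizedGram_add_two (i : ℕ) : regularizedGram lam φ (i + 2) =
    regularizedGram lam φ (i + 1) + vecMulVec (φ (i + 1)) (φ (i + 1)) := by
  rw [regularizedGram, regularizedGram, show i + 2 - 1 = i + 1 by omega, Nat.add_sub_cancel,
    sum_Icc_succ_top (by omega), add_assoc]

variable [Fintype n]

theorem posDef_regularizedGram (hlam : 0 < lam) (i : ℕ) : (regularizedGram lam φ i).PosDef :=
  (PosDef.one.smul hlam).add_posSemidef <|
    posSemidef_sum _ fun j _ => by simpa using posSemidef_vecMulVec_self_star (φ j)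

theorem det_regularizedGram (hlam : 0 < lam) (k : ℕ) : (regularizedGram lam φ (k + 1)).det =
    lam ^ Fintype.card n *
      ∏ i ∈ Icc 1 k, (1 + φ i ⬝ᵥ ((regularizedGram lam φ i)⁻¹ *ᵥ φ i)) := by
  induction k with
  | zero => simp [regularizedGram]
  | succ k ih =>
    have hunit :=
      (isUnit_iff_isUnit_det _).mp (posDef_regularizedGram (φ := φ) hlam (k + 1)).isUnit
    rw [regularizedGram_add_two, det_add_vecMulVec hunit, ih,
      prod_Icc_succ_top (Nat.le_add_left 1 k), mul_assoc]

theorem dotProduct_regularizedGram_mulVec (k : ℕ) (x : n → ℝ) :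
    x ⬝ᵥ (regularizedGram lam φ (k + 1) *ᵥ x) =
      lam * (x ⬝ᵥ x) + ∑ j ∈ Icc 1 k, (φ j ⬝ᵥ x) ^ 2 := by
  simp [regularizedGram, add_mulVec, smul_mulVec, sum_mulVec, sum_dotProduct,
    vecMulVec_mulVec, dotProduct_comm x, sq]

theorem dotProduct_regularizedGram_mulVec_le {k : ℕ} {L : ℝ}
    (hφ : ∀ j ∈ Icc 1 k, φ j ⬝ᵥ φ j ≤ L) (x : n → ℝ) :
    x ⬝ᵥ (regularizedGram lam φ (k + 1) *ᵥ x) ≤ (lam + k * L) * (x ⬝ᵥ x) := by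
  have hx : 0 ≤ x ⬝ᵥ x := Fintype.sum_nonneg fun j => mul_self_nonneg (x j)
  have hterm : ∀ j ∈ Icc 1 k, (φ j ⬝ᵥ x) ^ 2 ≤ L * (x ⬝ᵥ x) := fun j hj =>
    (sq_dotProduct_le_dotProduct_self_mul _ _).trans (mul_le_mul_of_nonneg_right (hφ j hj) hx)
  calc x ⬝ᵥ (regularizedGram lam φ (k + 1) *ᵥ x)
      ≤ lam * (x ⬝ᵥ x) + ∑ _j ∈ Icc 1 k, L * (x ⬝ᵥ x) := by
        rw [dotProduct_regularizedGram_mulVec]; gcongr with j hj; exact hterm j hj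
    _ = (lam + k * L) * (x ⬝ᵥ x) := by
        simp only [sum_const, Nat.card_Icc, add_tsub_cancel_right, nsmul_eq_mul]; ring

theorem prod_one_add_le_of_regularizedGram (hlam : 0 < lam) {k : ℕ} {L : ℝ}
    (hφ : ∀ j ∈ Icc 1 k, φ j ⬝ᵥ φ j ≤ L) :
    ∏ i ∈ Icc 1 k, (1 + φ i ⬝ᵥ ((regularizedGram lam φ i)⁻¹ *ᵥ φ i)) ≤
      ((lam + k * L) / lam) ^ Fintype.card n := by
  have hdet := (posDef_regularizedGram hlam (k + 1)).posSemidef.det_le_pow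
    (dotProduct_regularizedGram_mulVec_le hφ)
  rw [det_regularizedGram hlam] at hdet
  rw [div_pow, le_div_iff₀ (by positivity), mul_comm]
  exact hdet

end RegularizedGram

/-- Elliptical potential lemma.
For `Σ_i = λ I + ∑_{j=1}^{i-1} φ_j φ_jᵀ` with `λ > 0` and `‖φ_i‖ ≤ L_φ`,
`∑_{i=1}^{k} min{1, ‖φ_i‖²_{Σ_i⁻¹}} ≤ 2 d log((λ + k L_φ²)/λ)`. -/
theorem elliptical_potential_lemma
    (d k : ℕ) (lam : ℝ) (hlam : 0 < lam) (Lφ : ℝ)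
    (φ : ℕ → (Fin d → ℝ))
    (hφ : ∀ i ∈ Finset.Icc 1 k, Real.sqrt (φ i ⬝ᵥ φ i) ≤ Lφ)
    (Sig : ℕ → Matrix (Fin d) (Fin d) ℝ)
    (hSig : ∀ i, Sig i = lam • (1 : Matrix (Fin d) (Fin d) ℝ) +
      ∑ j ∈ Finset.Icc 1 (i - 1), Matrix.vecMulVec (φ j) (φ j)) :
    ∑ i ∈ Finset.Icc 1 k, min 1 (φ i ⬝ᵥ ((Sig i)⁻¹ *ᵥ φ i)) ≤
      2 * d * Real.log ((lam + k * Lφ ^ 2) / lam) := by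
  obtain rfl : Sig = regularizedGram lam φ := funext hSig
  set x : ℕ → ℝ := fun i => φ i ⬝ᵥ ((regularizedGram lam φ i)⁻¹ *ᵥ φ i)
  have hx : ∀ i, 0 ≤ x i := fun i => by
    simpa using (posDef_regularizedGram hlam i).inv.posSemidef.dotProduct_mulVec_nonneg (φ i)
  have hx1 : ∀ i, 0 < 1 + x i := fun i => by linarith [hx i]
  have hprod : ∏ i ∈ Icc 1 k, (1 + x i) ≤ ((lam + k * Lφ ^ 2) / lam) ^ d := by
    simpa using prod_one_add_le_of_regularizedGram hlam
      fun i hi => (Real.sqrt_le_iff.mp (hφ i hi)).2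
  calc ∑ i ∈ Icc 1 k, min 1 (x i)
      ≤ ∑ i ∈ Icc 1 k, 2 * Real.log (1 + x i) :=
        sum_le_sum fun i _ => min_one_le_two_mul_log_one_add (hx i)
    _ = 2 * Real.log (∏ i ∈ Icc 1 k, (1 + x i)) := by
        rw [Real.log_prod fun i _ => (hx1 i).ne', mul_sum]
    _ ≤ 2 * Real.log (((lam + k * Lφ ^ 2) / lam) ^ d) :=
        mul_le_mul_of_nonneg_left (Real.log_le_log (prod_pos fun i _ => hx1 i) hprod) zero_le_two
    _ = 2 * d * Real.log ((lam + k * Lφ ^ 2) / lam) := by rw [Real.log_pow]; ring
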